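/- arXiv:0801.1338 — 2 statements merged into one kernel-verified Lean document; each statement's English description precedes it below -/
import Mathlib

section
/- Let 1 ≤ p < ∞, R > 0, let u : ℝ^d → ℂ be integrable with supp(u) ⊆ B_R(0) and f̂ ∈ L^q, and let g ∈ C_c^∞(ℝ^d) with supp(g) ⊆ B_R(0) and ĝ integrable. Then for every ω ∈ ℝ^d, ‖V_g u(·, ω)‖_{L^p(ℝ^d)} ≤ |B_{2R}(0)|^{1/p} · (|û| ∗ |ĝ⁻|)(ω), where |B_{2R}(0)| is the Lebesgue measure of the ball of radius 2R. -/
open MeasureTheory Complex Metric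
open scoped ENNReal NNReal

noncomputable section

/-- Short-time Fourier transform. -/
def STFT {d : ℕ} (g f : EuclideanSpace ℝ (Fin d) → ℂ)
    (x ω : EuclideanSpace ℝ (Fin d)) : ℂ :=
  ∫ t, f t * (starRingEnd ℂ) (g (t - x)) *
    Complex.exp (-(2 * Real.pi * Complex.I) * ((inner ℝ t ω : ℝ) : ℂ))

/-- Fourier transform. -/
def FT {d : ℕ} (f : EuclideanSpace ℝ (Fin d) → ℂ) (ω : EuclideanSpace ℝ (Fin d)) : ℂ :=
  ∫ t, f t * Complex.exp (-(2 * Real.pi * Complex.I) * ((inner ℝ t ω : ℝ) : ℂ))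

open scoped FourierTransform RealInnerProductSpace

lemma norm_myexp (r : ℝ) : ‖Complex.exp (-(2 * Real.pi * Complex.I) * (r:ℂ))‖ = 1 := by
  have h : -(2 * Real.pi * Complex.I) * (r:ℂ) = ((-(2*Real.pi*r) : ℝ) : ℂ) * Complex.I := by
    push_cast; ring
  rw [h]; exact Complex.norm_exp_ofReal_mul_I _

lemma norm_myexp' (r : ℝ) : ‖Complex.exp ((2 * Real.pi * Complex.I) * (r:ℂ))‖ = 1 := by
  have h : (2 * Real.pi * Complex.I) * (r:ℂ) = (((2*Real.pi*r) : ℝ) : ℂ) * Complex.I := by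
    push_cast; ring
  rw [h]; exact Complex.norm_exp_ofReal_mul_I _

lemma stft_norm_le {d : ℕ} (u g : EuclideanSpace ℝ (Fin d) → ℂ)
    (hu : Integrable u) (hgc : Continuous g) (hgi : Integrable g)
    (hFg : Integrable (𝓕 g)) (x ω : EuclideanSpace ℝ (Fin d)) :
    ‖STFT g u x ω‖ ≤ ∫ ξ, ‖𝓕 g ξ‖ * ‖FT u (ω + ξ)‖ := by
  have hginv : ∀ s : EuclideanSpace ℝ (Fin d), (starRingEnd ℂ) (g s) =
      ∫ ξ, Complex.exp (-(2 * Real.pi * Complex.I) * ((⟪s, ξ⟫ : ℝ) : ℂ)) *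
        (starRingEnd ℂ) (𝓕 g ξ) := by
    intro s
    have h1 : g s = ∫ ξ, Complex.exp (((2*Real.pi*⟪s,ξ⟫ : ℝ) : ℂ) * Complex.I) • 𝓕 g ξ := by
      conv_lhs => rw [← hgc.fourierInv_fourier_eq hgi hFg]
      rw [Real.fourierInv_eq']
      congr 1; funext v
      rw [real_inner_comm]
    rw [h1, ← integral_conj]
    congr 1; funext ξ
    rw [smul_eq_mul, map_mul, ← Complex.exp_conj]
    congr 2
    rw [map_mul, Complex.conj_ofReal, Complex.conj_I]
    push_cast; ring
  set F : EuclideanSpace ℝ (Fin d) → EuclideanSpace ℝ (Fin d) → ℂ := fun t ξ =>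
    (u t * Complex.exp (-(2 * Real.pi * Complex.I) * ((⟪t, ω⟫ : ℝ) : ℂ))) *
      (Complex.exp (-(2 * Real.pi * Complex.I) * ((⟪t - x, ξ⟫ : ℝ) : ℂ)) *
        (starRingEnd ℂ) (𝓕 g ξ)) with hFdef
  have hFgcont : Continuous (𝓕 g) :=
    VectorFourier.fourierIntegral_continuous Real.continuous_fourierChar
      continuous_inner hgi
  have hFnorm : ∀ t ξ, ‖F t ξ‖ = ‖u t‖ * ‖𝓕 g ξ‖ := by
    intro t ξ
    simp only [hFdef, norm_mul, norm_myexp, RCLike.norm_conj]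
    ring
  have hFint : Integrable (Function.uncurry F) (volume.prod volume) := by
    apply Integrable.mono' (hu.norm.mul_prod hFg.norm)
    · apply AEStronglyMeasurable.mul
      · apply AEStronglyMeasurable.mul
        · exact hu.1.comp_fst
        · apply Continuous.aestronglyMeasurable
          exact Complex.continuous_exp.comp
            (continuous_const.mul (Complex.continuous_ofReal.comp
              ((continuous_fst.inner continuous_const))))
      · apply Continuous.aestronglyMeasurable
        apply Continuous.mul
        · exact Complex.continuous_exp.comp
            (continuous_const.mul (Complex.continuous_ofReal.comp
              (((continuous_fst.sub continuous_const).inner continuous_snd))))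
        · exact Complex.continuous_conj.comp (hFgcont.comp continuous_snd)
    · filter_upwards with p
      rw [Function.uncurry, hFnorm]
  have key : STFT g u x ω = ∫ ξ, ∫ t, F t ξ := by
    rw [STFT, ← integral_integral_swap hFint]
    congr 1; funext t
    rw [hginv (t - x),
      show u t * (∫ ξ, Complex.exp (-(2 * Real.pi * Complex.I) * ((⟪t - x, ξ⟫ : ℝ) : ℂ)) *
          (starRingEnd ℂ) (𝓕 g ξ)) *
          Complex.exp (-(2 * Real.pi * Complex.I) * ((⟪t, ω⟫ : ℝ) : ℂ)) =
        (u t * Complex.exp (-(2 * Real.pi * Complex.I) * ((⟪t, ω⟫ : ℝ) : ℂ))) *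
          ∫ ξ, Complex.exp (-(2 * Real.pi * Complex.I) * ((⟪t - x, ξ⟫ : ℝ) : ℂ)) *
            (starRingEnd ℂ) (𝓕 g ξ) from by ring,
      ← integral_const_mul]
  have hJ : ∀ ξ : EuclideanSpace ℝ (Fin d), ∫ t, F t ξ =
      ((starRingEnd ℂ) (𝓕 g ξ) * Complex.exp ((2 * Real.pi * Complex.I) * ((⟪x, ξ⟫ : ℝ) : ℂ))) *
        FT u (ω + ξ) := by
    intro ξ
    rw [FT, ← integral_const_mul]
    congr 1; funext t
    have hinner : (⟪t, ω + ξ⟫ : ℝ) = ⟪t, ω⟫ + ⟪t - x, ξ⟫ + ⟪x, ξ⟫ := by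
      rw [inner_add_right, inner_sub_left]; ring
    have hC : ((⟪t, ω + ξ⟫ : ℝ) : ℂ) =
        ((⟪t, ω⟫ : ℝ) : ℂ) + ((⟪t - x, ξ⟫ : ℝ) : ℂ) + ((⟪x, ξ⟫ : ℝ) : ℂ) := by
      exact_mod_cast congrArg Complex.ofReal hinner
    have hexp : Complex.exp (-(2 * Real.pi * Complex.I) * ((⟪t, ω⟫ : ℝ) : ℂ)) *
        Complex.exp (-(2 * Real.pi * Complex.I) * ((⟪t - x, ξ⟫ : ℝ) : ℂ)) =
        Complex.exp ((2 * Real.pi * Complex.I) * ((⟪x, ξ⟫ : ℝ) : ℂ)) *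
        Complex.exp (-(2 * Real.pi * Complex.I) * ((⟪t, ω + ξ⟫ : ℝ) : ℂ)) := by
      rw [← Complex.exp_add, ← Complex.exp_add]
      congr 1
      linear_combination (2 * Real.pi * Complex.I) * hC
    have step1 : F t ξ = ((u t * (starRingEnd ℂ) (𝓕 g ξ)) *
        (Complex.exp (-(2 * Real.pi * Complex.I) * ((⟪t, ω⟫ : ℝ) : ℂ)) *
         Complex.exp (-(2 * Real.pi * Complex.I) * ((⟪t - x, ξ⟫ : ℝ) : ℂ)))) := by
      simp only [hFdef]; ring
    rw [step1, hexp]; ring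
  calc ‖STFT g u x ω‖ ≤ ∫ ξ, ‖∫ t, F t ξ‖ := by
        rw [key]; exact norm_integral_le_integral_norm _
    _ = ∫ ξ, ‖𝓕 g ξ‖ * ‖FT u (ω + ξ)‖ := by
        congr 1; funext ξ
        rw [hJ, norm_mul, norm_mul, RCLike.norm_conj, norm_myexp', mul_one]

lemma FT_eq {d : ℕ} (f : EuclideanSpace ℝ (Fin d) → ℂ) : FT f = 𝓕 f := by
  funext w
  rw [FT, Real.fourier_eq']
  congr 1; funext v
  rw [smul_eq_mul, mul_comm]
  congr 2
  push_cast
  ring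

theorem stft_lp_slice_bound {d : ℕ} (p q : ℝ≥0∞) (hp : 1 ≤ p) (hp' : p ≠ ⊤)
    (R : ℝ) (hR : 0 < R) (u g : EuclideanSpace ℝ (Fin d) → ℂ)
    (hu_int : Integrable u) (hu_supp : Function.support u ⊆ closedBall 0 R)
    (hFu : MemLp (FT u) q)
    (hg_smooth : ContDiff ℝ (⊤ : ℕ∞) g) (hg_cpt : HasCompactSupport g)
    (hg_supp : tsupport g ⊆ closedBall 0 R) (hFg : Integrable (FT g))
    (ω : EuclideanSpace ℝ (Fin d)) :
    eLpNorm (fun x => STFT g u x ω) p volume ≤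
      (volume (closedBall (0 : EuclideanSpace ℝ (Fin d)) (2 * R))) ^ (1 / p.toReal) *
        ENNReal.ofReal (∫ ξ, ‖FT u ξ‖ * ‖FT g (ξ - ω)‖) := by
  set C : ℝ := ∫ ξ, ‖FT u ξ‖ * ‖FT g (ξ - ω)‖ with hCdef
  have hC0 : 0 ≤ C := integral_nonneg fun ξ => mul_nonneg (norm_nonneg _) (norm_nonneg _)
  have hgc : Continuous g := hg_smooth.continuous
  have hgi : Integrable g := hgc.integrable_of_hasCompactSupport hg_cpt
  have hFg' : Integrable (𝓕 g) := by rwa [← FT_eq]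
  -- pointwise bound
  have hbd : ∀ x, ‖STFT g u x ω‖ ≤ C := by
    intro x
    refine (stft_norm_le u g hu_int hgc hgi hFg' x ω).trans_eq ?_
    have htrans : (∫ ξ, ‖FT u (ω + ξ)‖ * ‖FT g ξ‖) = C := by
      rw [hCdef, ← integral_add_left_eq_self (μ := volume)
        (fun ξ => ‖FT u ξ‖ * ‖FT g (ξ - ω)‖) ω]
      congr 1; funext ξ; rw [add_sub_cancel_left]
    rw [← htrans]
    congr 1; funext ξ
    rw [FT_eq g, mul_comm]
  -- support
  have hsupp : ∀ x : EuclideanSpace ℝ (Fin d),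
      x ∉ closedBall (0 : EuclideanSpace ℝ (Fin d)) (2 * R) → STFT g u x ω = 0 := by
    intro x hx
    have hxn : 2 * R < ‖x‖ := by
      simpa [mem_closedBall, dist_zero_right] using hx
    rw [STFT]
    have : ∀ t : EuclideanSpace ℝ (Fin d),
        u t * (starRingEnd ℂ) (g (t - x)) *
          Complex.exp (-(2 * Real.pi * Complex.I) * ((inner ℝ t ω : ℝ) : ℂ)) = 0 := by
      intro t
      by_cases hut : u t = 0
      · rw [hut]; ring
      · have htR : ‖t‖ ≤ R := by
          have := hu_supp (Function.mem_support.2 hut)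
          simpa [mem_closedBall, dist_zero_right] using this
        have hg0 : g (t - x) = 0 := by
          apply image_eq_zero_of_notMem_tsupport
          intro hmem
          have : ‖t - x‖ ≤ R := by
            simpa [mem_closedBall, dist_zero_right] using hg_supp hmem
          have h1 : ‖x‖ - ‖t‖ ≤ ‖t - x‖ := by
            have := norm_sub_norm_le (x) (t)
            calc ‖x‖ - ‖t‖ ≤ ‖x - t‖ := norm_sub_norm_le x t
              _ = ‖t - x‖ := norm_sub_rev x t
          linarith
        rw [hg0]; simp
    simp only [this, integral_zero]
  -- Lp estimate
  have hmono : ∀ x, ‖STFT g u x ω‖ ≤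
      ‖(closedBall (0 : EuclideanSpace ℝ (Fin d)) (2 * R)).indicator
        (fun _ => (C : ℂ)) x‖ := by
    intro x
    by_cases hx : x ∈ closedBall (0 : EuclideanSpace ℝ (Fin d)) (2 * R)
    · rw [Set.indicator_of_mem hx]
      simpa [Complex.norm_real, _root_.abs_of_nonneg hC0] using hbd x
    · rw [hsupp x hx, Set.indicator_of_notMem hx]
  calc eLpNorm (fun x => STFT g u x ω) p volume
      ≤ eLpNorm ((closedBall (0 : EuclideanSpace ℝ (Fin d)) (2 * R)).indicator
          (fun _ => (C : ℂ))) p volume := eLpNorm_mono hmono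
    _ = ‖(C : ℂ)‖₊ * (volume (closedBall (0 : EuclideanSpace ℝ (Fin d)) (2 * R))) ^
          (1 / p.toReal) := eLpNorm_indicator_const measurableSet_closedBall
          ((zero_lt_one.trans_le hp).ne') hp'
    _ = _ := by
        rw [mul_comm]
        congr 1
        rw [← enorm_eq_nnnorm, ← ofReal_norm]
        congr 1
        rw [Complex.norm_real, Real.norm_eq_abs, _root_.abs_of_nonneg hC0]
end
end

section
/- Let 1 ≤ p, q < ∞, R > 0, u : ℝ^d → ℂ integrable with supp(u) ⊆ B_R(0), and g ∈ C_c^∞(ℝ^d) with g ≡ 1 on B_{2R}(0). Then ‖û‖_{L^q(ℝ^d)} ≤ |B_R(0)|^{−1/p} · ‖V_g u‖_{L^{p,q}}, where ‖V_g u‖_{L^{p,q}} = (∫ (∫ |V_g u(x,ω)|^p dx)^{q/p} dω)^{1/q}. -/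
open MeasureTheory Complex Metric
open scoped ENNReal NNReal

noncomputable section

/-- Mixed `L^{p,q}` norm of a function of two variables. -/
def MixedNorm {d : ℕ} (F : EuclideanSpace ℝ (Fin d) → EuclideanSpace ℝ (Fin d) → ℂ)
    (p q : ℝ≥0∞) : ℝ≥0∞ :=
  (∫⁻ ω, (∫⁻ x, (‖F x ω‖₊ : ℝ≥0∞) ^ p.toReal) ^ (q.toReal / p.toReal)) ^ (1 / q.toReal)

theorem fourier_lq_le_mixed_norm {d : ℕ} (p q : ℝ≥0∞) (hp : 1 ≤ p) (hp' : p ≠ ⊤)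
    (hq : 1 ≤ q) (hq' : q ≠ ⊤)
    (R : ℝ) (hR : 0 < R) (u g : EuclideanSpace ℝ (Fin d) → ℂ)
    (hu_int : Integrable u) (hu_supp : Function.support u ⊆ closedBall 0 R)
    (hg_smooth : ContDiff ℝ (⊤ : ℕ∞) g) (hg_cpt : HasCompactSupport g)
    (hg_one : ∀ y ∈ closedBall (0 : EuclideanSpace ℝ (Fin d)) (2 * R), g y = 1) :
    eLpNorm (FT u) q volume ≤
      (volume (closedBall (0 : EuclideanSpace ℝ (Fin d)) R)) ^ (-(1 / p.toReal)) *
        MixedNorm (STFT g u) p q := by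
  have hp0 : p ≠ 0 := (lt_of_lt_of_le zero_lt_one hp).ne'
  have hq0 : q ≠ 0 := (lt_of_lt_of_le zero_lt_one hq).ne'
  have hpr : 0 < p.toReal := ENNReal.toReal_pos hp0 hp'
  have hqr : 0 < q.toReal := ENNReal.toReal_pos hq0 hq'
  set pr := p.toReal with hprdef
  set qr := q.toReal with hqrdef
  set vb := volume (closedBall (0 : EuclideanSpace ℝ (Fin d)) R) with hvbdef
  have hvb0 : vb ≠ 0 := (measure_closedBall_pos volume 0 hR).ne'
  have hvbt : vb ≠ ⊤ := measure_closedBall_lt_top.ne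
  -- Step 1 : on the ball, STFT = FT
  have hSTFT : ∀ ω, ∀ x ∈ closedBall (0 : EuclideanSpace ℝ (Fin d)) R,
      STFT g u x ω = FT u ω := by
    intro ω x hx
    unfold STFT FT
    refine integral_congr_ae (Filter.Eventually.of_forall fun t => ?_)
    by_cases ht : u t = 0
    · simp [ht]
    · have htR : t ∈ closedBall (0 : EuclideanSpace ℝ (Fin d)) R :=
        hu_supp (by simpa [Function.mem_support] using ht)
      rw [mem_closedBall_zero_iff] at htR
      rw [mem_closedBall_zero_iff] at hx
      have hgx : g (t - x) = 1 := by
        apply hg_one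
        rw [mem_closedBall_zero_iff]
        calc ‖t - x‖ ≤ ‖t‖ + ‖x‖ := norm_sub_le _ _
          _ ≤ R + R := add_le_add htR hx
          _ = 2 * R := by ring
      simp [hgx]
  -- Step 2 : lower bound for inner integral
  have hlow : ∀ ω, (‖FT u ω‖₊ : ℝ≥0∞) ^ pr * vb
      ≤ ∫⁻ x, (‖STFT g u x ω‖₊ : ℝ≥0∞) ^ pr := by
    intro ω
    calc (‖FT u ω‖₊ : ℝ≥0∞) ^ pr * vb
        = ∫⁻ _ in closedBall (0 : EuclideanSpace ℝ (Fin d)) R,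
            (‖FT u ω‖₊ : ℝ≥0∞) ^ pr := by rw [setLIntegral_const]
      _ = ∫⁻ x in closedBall (0 : EuclideanSpace ℝ (Fin d)) R,
            (‖STFT g u x ω‖₊ : ℝ≥0∞) ^ pr := by
          refine setLIntegral_congr_fun measurableSet_closedBall
            (fun x hx => ?_)
          rw [hSTFT ω x hx]
      _ ≤ ∫⁻ x, (‖STFT g u x ω‖₊ : ℝ≥0∞) ^ pr := setLIntegral_le_lintegral _ _
  have hqp : 0 ≤ qr / pr := by positivity
  -- Step 3 : integrate in ω
  have hmain : vb ^ (qr / pr) * ∫⁻ ω, (‖FT u ω‖₊ : ℝ≥0∞) ^ qr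
      ≤ ∫⁻ ω, (∫⁻ x, (‖STFT g u x ω‖₊ : ℝ≥0∞) ^ pr) ^ (qr / pr) := by
    rw [← lintegral_const_mul' _ _ (ENNReal.rpow_ne_top_of_nonneg hqp hvbt)]
    refine lintegral_mono fun ω => ?_
    have h := ENNReal.rpow_le_rpow (hlow ω) hqp
    rwa [ENNReal.mul_rpow_of_nonneg _ _ hqp, ← ENNReal.rpow_mul,
      show pr * (qr / pr) = qr by field_simp, mul_comm] at h
  -- Step 4 : take 1/q powers
  have hfin := ENNReal.rpow_le_rpow hmain (by positivity : (0:ℝ) ≤ 1 / qr)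
  rw [ENNReal.mul_rpow_of_nonneg _ _ (by positivity : (0:ℝ) ≤ 1 / qr),
    ← ENNReal.rpow_mul,
    show qr / pr * (1 / qr) = 1 / pr by field_simp] at hfin
  have hEL : eLpNorm (FT u) q volume
      = (∫⁻ ω, (‖FT u ω‖₊ : ℝ≥0∞) ^ qr) ^ (1 / qr) := by
    simp only [eLpNorm_eq_lintegral_rpow_enorm_toReal hq0 hq', enorm_eq_nnnorm, hqrdef]
  have key : vb ^ (1 / pr) * eLpNorm (FT u) q volume ≤ MixedNorm (STFT g u) p q := by
    rw [hEL]
    exact hfin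
  calc eLpNorm (FT u) q volume
      = vb ^ (-(1 / pr)) * (vb ^ (1 / pr) * eLpNorm (FT u) q volume) := by
        rw [← mul_assoc, ← ENNReal.rpow_add _ _ hvb0 hvbt, neg_add_cancel,
          ENNReal.rpow_zero, one_mul]
    _ ≤ vb ^ (-(1 / pr)) * MixedNorm (STFT g u) p q := mul_le_mul_right key _
end
end
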